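/- arXiv:2011.02349 — 4 statements merged into one kernel-verified Lean document; each statement's English description precedes it below -/
import Mathlib

section
/- Let Ω be a nonempty finite set equipped with the uniform probability measure P and expectation E. Let n, n⁰ : Ω → ℝ≥0, T : Ω → [0,∞], ξ ∈ [0,1] and fix τ ∈ [0,∞). Assume (i) for every ρ ∈ [0,∞] with P(T = ρ) > 0, E(n | T = ρ) = (1 − ξ·1_{ρ ≤ τ})·E(n⁰ | T = ρ); (ii) n⁰ and T are independent under P; and (iii) 1 − ξ·P(T ≤ τ) > 0. Then for every ρ ∈ [0,∞] with P(T = ρ) > 0, E(n | T = ρ) = ((1 − ξ·1_{ρ ≤ τ})/(1 − ξ·P(T ≤ τ)))·E(n). -/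
open Finset
open scoped Classical ENNReal NNReal

noncomputable section

variable {Ω : Type*} [Fintype Ω]

/-- Number of elements of `Ω` satisfying `E`, as a real number. -/
def cnt (E : Ω → Prop) : ℝ := ((Finset.univ.filter E).card : ℝ)

/-- The uniform (counting) probability of the event `E`. -/
def pr (E : Ω → Prop) : ℝ := cnt E / (Fintype.card Ω : ℝ)

/-- The conditional probability of the event `E` given the event `C`
(junk value `0` if `C` is empty). -/
def prC (C E : Ω → Prop) : ℝ := cnt (fun ω => C ω ∧ E ω) / cnt C

/-- The expectation of `X` under the uniform probability measure. -/
def expec (X : Ω → ℝ) : ℝ := (∑ ω, X ω) / (Fintype.card Ω : ℝ)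

/-- The conditional expectation of `X` given the event `C`, i.e. the average of `X`
over `C` (junk value `0` if `C` is empty). -/
def expecC (C : Ω → Prop) (X : Ω → ℝ) : ℝ :=
  (∑ ω ∈ Finset.univ.filter C, X ω) / cnt C

end

/-!
Independence makes `n⁰` look the same on every fibre of `T`: `E(n⁰ | T = ρ) = E(n⁰)`.
By the suppression hypothesis `E(n | T = ρ) = a(ρ) · E(n⁰)` with `a(ρ) = 1 − ξ·1_{ρ ≤ τ}`, and
averaging over the fibres (tower property) gives `E(n) = E(a ∘ T) · E(n⁰) = (1 − ξ·P(T ≤ τ)) · E(n⁰)`.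
Eliminating `E(n⁰)` yields the claim.
-/

section UniformProbability

variable {Ω : Type*} [Fintype Ω]

lemma pr_pos_iff (E : Ω → Prop) : 0 < pr E ↔ (univ.filter E).Nonempty := by
  unfold pr cnt
  constructor
  · intro h
    by_contra hE
    rw [Finset.not_nonempty_iff_eq_empty.1 hE] at h
    simp at h
  · intro hE
    have hΩ : Nonempty Ω := let ⟨ω, _⟩ := hE; ⟨ω⟩
    have : 0 < (Fintype.card Ω : ℝ) := by exact_mod_cast Fintype.card_pos
    exact div_pos (by exact_mod_cast hE.card_pos) this

lemma sum_filter_eq_cnt_mul_expecC (C : Ω → Prop) (X : Ω → ℝ) :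
    ∑ ω ∈ univ.filter C, X ω = cnt C * expecC C X := by
  unfold expecC
  by_cases h : cnt C = 0
  · have hempty : univ.filter C = ∅ := by
      unfold cnt at h
      exact Finset.card_eq_zero.1 (by exact_mod_cast h)
    simp [h, hempty]
  · exact (mul_div_cancel₀ _ h).symm

lemma expec_indicator (E : Ω → Prop) [DecidablePred E] :
    expec (fun ω => if E ω then (1 : ℝ) else 0) = pr E := by
  simp only [expec, pr, cnt, Finset.sum_boole]
  congr

lemma sum_filter_comp_eq_sum_image {α : Type*} (C : Ω → Prop) (X : Ω → α) (f : α → ℝ) :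
    ∑ ω ∈ univ.filter C, f (X ω) =
      ∑ y ∈ univ.image X, f y * cnt (fun ω => X ω = y ∧ C ω) := by
  rw [← Finset.sum_fiberwise_of_maps_to (g := X) (t := univ.image X)
    (fun ω _ => Finset.mem_image_of_mem X (Finset.mem_univ ω))]
  refine Finset.sum_congr rfl fun y _ => ?_
  rw [Finset.sum_congr rfl fun ω hω => by rw [(Finset.mem_filter.1 hω).2], Finset.sum_const,
    nsmul_eq_mul, mul_comm, cnt, Finset.filter_filter]
  congr 3
  ext ω
  simp [and_comm]

lemma expec_eq_expec_comp_of_expecC_eq {β : Type*} (X : Ω → ℝ) (T : Ω → β) (g : β → ℝ)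
    (hX : ∀ ρ, 0 < pr (fun ω => T ω = ρ) → expecC (fun ω => T ω = ρ) X = g ρ) :
    expec X = expec (fun ω => g (T ω)) := by
  unfold expec
  congr 1
  have hT : ∀ ω ∈ (univ : Finset Ω), T ω ∈ univ.image T :=
    fun ω _ => Finset.mem_image_of_mem T (Finset.mem_univ ω)
  rw [← Finset.sum_fiberwise_of_maps_to hT, ← Finset.sum_fiberwise_of_maps_to hT]
  refine Finset.sum_congr rfl fun ρ hρ => ?_
  obtain ⟨ω₀, -, hω₀⟩ := Finset.mem_image.1 hρ
  have hpos : 0 < pr (fun ω => T ω = ρ) :=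
    (pr_pos_iff _).2 ⟨ω₀, Finset.mem_filter.2 ⟨Finset.mem_univ _, hω₀⟩⟩
  rw [sum_filter_eq_cnt_mul_expecC, hX ρ hpos,
    Finset.sum_congr rfl fun ω hω => by rw [(Finset.mem_filter.1 hω).2], Finset.sum_const,
    nsmul_eq_mul, cnt]

lemma expecC_eq_expec_of_indep {α : Type*} (X : Ω → α) (C : Ω → Prop) (f : α → ℝ)
    (hind : ∀ y, pr (fun ω => X ω = y ∧ C ω) = pr (fun ω => X ω = y) * pr C)
    (hC : 0 < pr C) :
    expecC C (fun ω => f (X ω)) = expec (fun ω => f (X ω)) := by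
  obtain ⟨ω₀, -⟩ := (pr_pos_iff C).1 hC
  have hN : (Fintype.card Ω : ℝ) ≠ 0 := by
    have : Nonempty Ω := ⟨ω₀⟩
    exact_mod_cast Fintype.card_ne_zero
  have hcnt : ∀ y, cnt (fun ω => X ω = y ∧ C ω) =
      cnt C / Fintype.card Ω * cnt (fun ω => X ω = y) := by
    intro y
    rw [← div_mul_cancel₀ (cnt _) hN]
    simp only [pr] at hind
    rw [hind y]
    field_simp
  have hsum := sum_filter_comp_eq_sum_image (fun _ => True) X f
  simp only [and_true, Finset.filter_true] at hsum
  have hcntC : cnt C ≠ 0 := by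
    intro h0
    simp [pr, h0] at hC
  rw [expecC, sum_filter_comp_eq_sum_image, expec, hsum]
  simp_rw [hcnt, mul_left_comm _ (cnt C / _), ← Finset.mul_sum]
  field_simp [hcntC]

end UniformProbability

theorem statement_1_general {Ω : Type*} [Fintype Ω]
    (n n0 : Ω → ℝ≥0) (T : Ω → ℝ≥0∞) (ξ : ℝ) (τ : ℝ≥0)
    (hsup : ∀ ρ : ℝ≥0∞, 0 < pr (fun ω => T ω = ρ) →
      expecC (fun ω => T ω = ρ) (fun ω => (n ω : ℝ)) =
        (1 - ξ * (if ρ ≤ (τ : ℝ≥0∞) then (1 : ℝ) else 0)) *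
          expecC (fun ω => T ω = ρ) (fun ω => (n0 ω : ℝ)))
    (hind : ∀ (y : ℝ≥0) (ρ : ℝ≥0∞),
      pr (fun ω => n0 ω = y ∧ T ω = ρ) =
        pr (fun ω => n0 ω = y) * pr (fun ω => T ω = ρ))
    (hpos : 0 < 1 - ξ * pr (fun ω => T ω ≤ (τ : ℝ≥0∞))) :
    ∀ ρ : ℝ≥0∞, 0 < pr (fun ω => T ω = ρ) →
      expecC (fun ω => T ω = ρ) (fun ω => (n ω : ℝ)) =
        ((1 - ξ * (if ρ ≤ (τ : ℝ≥0∞) then (1 : ℝ) else 0)) /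
            (1 - ξ * pr (fun ω => T ω ≤ (τ : ℝ≥0∞)))) *
          expec (fun ω => (n ω : ℝ)) := by
  have hfibre : ∀ ρ, 0 < pr (fun ω => T ω = ρ) →
      expecC (fun ω => T ω = ρ) (fun ω => (n0 ω : ℝ)) = expec (fun ω => (n0 ω : ℝ)) :=
    fun ρ hρ => expecC_eq_expec_of_indep n0 _ (↑) (fun y => hind y ρ) hρ
  intro ρ hρ
  obtain ⟨ω₀, -⟩ := (pr_pos_iff _).1 hρ
  have : Nonempty Ω := ⟨ω₀⟩
  have htotal : expec (fun ω => (n ω : ℝ)) =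
      (1 - ξ * pr (fun ω => T ω ≤ (τ : ℝ≥0∞))) * expec (fun ω => (n0 ω : ℝ)) := by
    rw [expec_eq_expec_comp_of_expecC_eq _ T
      (fun ρ => (1 - ξ * (if ρ ≤ (τ : ℝ≥0∞) then (1 : ℝ) else 0)) * expec (fun ω => (n0 ω : ℝ)))
      (fun ρ hρ => by rw [hsup ρ hρ, hfibre ρ hρ]), ← expec_indicator]
    simp only [expec, ← Finset.sum_mul, Finset.sum_sub_distrib, ← Finset.mul_sum,
      Finset.sum_const, Finset.card_univ, nsmul_eq_mul, mul_one]
    field_simp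
  rw [hsup ρ hρ, hfibre ρ hρ, htotal]
  field_simp [hpos.ne']

/-- Under the suppression hypothesis, independence of `n⁰` and `T`,
and `1 − ξ·P(T ≤ τ) > 0`, for every `ρ ∈ [0,∞]` with `P(T = ρ) > 0` one has
`E(n | T = ρ) = ((1 − ξ·1_{ρ ≤ τ})/(1 − ξ·P(T ≤ τ)))·E(n)`. -/
theorem statement_1 {Ω : Type*} [Fintype Ω] [Nonempty Ω]
    (n n0 : Ω → ℝ≥0) (T : Ω → ℝ≥0∞) (ξ : ℝ) (hξ0 : 0 ≤ ξ) (hξ1 : ξ ≤ 1) (τ : ℝ≥0)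
    (hsup : ∀ ρ : ℝ≥0∞, 0 < pr (fun ω => T ω = ρ) →
      expecC (fun ω => T ω = ρ) (fun ω => (n ω : ℝ)) =
        (1 - ξ * (if ρ ≤ (τ : ℝ≥0∞) then (1 : ℝ) else 0)) *
          expecC (fun ω => T ω = ρ) (fun ω => (n0 ω : ℝ)))
    (hind : ∀ (y : ℝ≥0) (ρ : ℝ≥0∞),
      pr (fun ω => n0 ω = y ∧ T ω = ρ) =
        pr (fun ω => n0 ω = y) * pr (fun ω => T ω = ρ))
    (hpos : 0 < 1 - ξ * pr (fun ω => T ω ≤ (τ : ℝ≥0∞))) :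
    ∀ ρ : ℝ≥0∞, 0 < pr (fun ω => T ω = ρ) →
      expecC (fun ω => T ω = ρ) (fun ω => (n ω : ℝ)) =
        ((1 - ξ * (if ρ ≤ (τ : ℝ≥0∞) then (1 : ℝ) else 0)) /
            (1 - ξ * pr (fun ω => T ω ≤ (τ : ℝ≥0∞)))) *
          expec (fun ω => (n ω : ℝ)) :=
  statement_1_general n n0 T ξ τ hsup hind hpos
end

section
/- Let Ω be a nonempty finite set equipped with the uniform probability measure P and expectation E. Let n, n⁰ : Ω → ℝ≥0, let T : Ω → [0,∞], let G : Ω → ℝ (a severity label, with finite range), let ξ ∈ [0,1] and fix τ ∈ [0,∞). Assume (i) the suppression hypothesis by severity: for every g with P(G = g) > 0 and every ρ ∈ [0,∞] with P(T = ρ, G = g) > 0, E(n | T = ρ, G = g) = (1 − ξ·1_{ρ ≤ τ})·E(n⁰ | T = ρ, G = g); and (ii) n⁰ and T are conditionally independent given G. Then E(n) = Σ_g P(G = g)·E(n⁰ | G = g)·(1 − ξ·P(T ≤ τ | G = g)), where the sum runs over the (finitely many) values g with P(G = g) > 0. -/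
open Finset
open scoped Classical ENNReal NNReal

/-!
Split `Ω` into the severity classes `G = g`. Inside a class, the suppression hypothesis, applied
on each fibre `T = ρ`, turns `E(n | G = g)` into `E((1 - ξ·1_{T ≤ τ})·n⁰ | G = g)`, and conditional
independence factors `E(n⁰·1_{T ≤ τ} | G = g)` as `E(n⁰ | G = g)·P(T ≤ τ | G = g)`. The law of
total expectation over the classes gives the formula.
-/

section ConditionalAverages

variable {Ω α β : Type*} [Fintype Ω]

lemma pr_pos_of_exists {E : Ω → Prop} (h : ∃ ω, E ω) : 0 < pr E := by
  obtain ⟨ω, hω⟩ := h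
  have : Nonempty Ω := ⟨ω⟩
  exact div_pos (Nat.cast_pos.mpr (card_pos.mpr ⟨ω, by simpa using hω⟩))
    (Nat.cast_pos.mpr Fintype.card_pos)

lemma cnt_mul_expecC (C : Ω → Prop) [DecidablePred C] (X : Ω → ℝ) :
    cnt C * expecC C X = ∑ ω ∈ univ.filter C, X ω := by
  rcases eq_or_ne (cnt C) 0 with h | h
  · have : univ.filter C = ∅ := card_eq_zero.mp (by simpa [cnt] using h)
    simp [h, this]
  · rw [expecC, mul_div_cancel₀ _ h]
    congr

lemma pr_mul_expecC (C : Ω → Prop) (X : Ω → ℝ) :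
    pr C * expecC C X = (∑ ω ∈ univ.filter C, X ω) / Fintype.card Ω := by
  rw [pr, div_mul_eq_mul_div, cnt_mul_expecC]

lemma expec_eq_sum_pr_mul_expecC (X : Ω → ℝ) (G : Ω → α) :
    expec X = ∑ g ∈ univ.image G, pr (fun ω => G ω = g) * expecC (fun ω => G ω = g) X := by
  simp only [pr_mul_expecC, expec, ← sum_div]
  congr 1
  exact (sum_fiberwise_of_maps_to (fun ω _ => mem_image_of_mem G (mem_univ ω)) X).symm

lemma sum_filter_eq_sum_fiberwise (C : Ω → Prop) (Y : Ω → α) {t : Finset α}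
    (ht : ∀ ω, Y ω ∈ t) (X : Ω → ℝ) :
    ∑ ω ∈ univ.filter C, X ω = ∑ b ∈ t, ∑ ω ∈ univ.filter (fun ω => C ω ∧ Y ω = b), X ω := by
  rw [← sum_fiberwise_of_maps_to (g := Y) (fun ω _ => ht ω)]
  simp only [filter_filter]

lemma expecC_comp_eq_sum (C : Ω → Prop) (Y : Ω → α) {t : Finset α} (ht : ∀ ω, Y ω ∈ t)
    (F : α → ℝ) :
    expecC C (fun ω => F (Y ω)) = ∑ b ∈ t, F b * prC C (fun ω => Y ω = b) := by
  simp only [expecC, prC]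
  rw [sum_filter_eq_sum_fiberwise C Y ht, sum_div]
  refine sum_congr rfl fun b _ => ?_
  rw [mul_div_assoc', sum_congr rfl fun ω hω => congrArg F (mem_filter.mp hω).2.2, sum_const,
    nsmul_eq_mul, mul_comm]
  simp only [cnt]
  congr

lemma expecC_ite_one_zero (C E : Ω → Prop) [DecidablePred E] :
    expecC C (fun ω => if E ω then 1 else 0) = prC C E := by
  simp only [expecC, prC, cnt, ← sum_filter, sum_const, nsmul_one, filter_filter]
  congr

lemma expecC_sub_mul (C : Ω → Prop) (X Y : Ω → ℝ) (c : ℝ) :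
    expecC C (fun ω => X ω - c * Y ω) = expecC C X - c * expecC C Y := by
  simp only [expecC, sum_sub_distrib, ← mul_sum]
  ring

lemma expecC_eq_expecC_mul_of_fiberwise (C : Ω → Prop) (Y : Ω → β)
    (X Z : Ω → ℝ) (c : β → ℝ)
    (h : ∀ b, 0 < pr (fun ω => Y ω = b ∧ C ω) →
      expecC (fun ω => Y ω = b ∧ C ω) X = c b * expecC (fun ω => Y ω = b ∧ C ω) Z) :
    expecC C X = expecC C (fun ω => c (Y ω) * Z ω) := by
  suffices ∑ ω ∈ univ.filter C, X ω = ∑ ω ∈ univ.filter C, c (Y ω) * Z ω by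
    rw [expecC, expecC, this]
  have ht : ∀ ω, Y ω ∈ univ.image Y := fun ω => mem_image_of_mem Y (mem_univ ω)
  rw [sum_filter_eq_sum_fiberwise C Y ht, sum_filter_eq_sum_fiberwise C Y ht]
  refine sum_congr rfl fun b _ => ?_
  have hfib : univ.filter (fun ω => C ω ∧ Y ω = b) = univ.filter (fun ω => Y ω = b ∧ C ω) := by
    simp only [and_comm]
  have hconst : ∑ ω ∈ univ.filter (fun ω => Y ω = b ∧ C ω), c (Y ω) * Z ω =
      c b * ∑ ω ∈ univ.filter (fun ω => Y ω = b ∧ C ω), Z ω := by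
    rw [mul_sum]
    exact sum_congr rfl fun ω hω => by rw [(mem_filter.mp hω).2.1]
  rw [hfib, hconst, ← cnt_mul_expecC, ← cnt_mul_expecC]
  by_cases hb : ∃ ω, Y ω = b ∧ C ω
  · rw [h b (pr_pos_of_exists hb)]
    ring
  · have : cnt (fun ω => Y ω = b ∧ C ω) = 0 := by
      simp only [cnt, Nat.cast_eq_zero, card_eq_zero, filter_eq_empty_iff]
      exact fun ω _ hω => hb ⟨ω, hω⟩
    simp [this]

lemma expecC_mul_eq_mul_of_indep (C : Ω → Prop) (X : Ω → α) (Y : Ω → β)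
    (h : ∀ a b, prC C (fun ω => X ω = a ∧ Y ω = b) =
      prC C (fun ω => X ω = a) * prC C (fun ω => Y ω = b))
    (φ : α → ℝ) (ψ : β → ℝ) :
    expecC C (fun ω => φ (X ω) * ψ (Y ω)) =
      expecC C (fun ω => φ (X ω)) * expecC C (fun ω => ψ (Y ω)) := by
  rw [expecC_comp_eq_sum C (fun ω => (X ω, Y ω)) (t := univ.image X ×ˢ univ.image Y)
      (by simp) (fun p => φ p.1 * ψ p.2),
    expecC_comp_eq_sum C X (t := univ.image X) (by simp),
    expecC_comp_eq_sum C Y (t := univ.image Y) (by simp), sum_mul_sum, sum_product]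
  refine sum_congr rfl fun a _ => sum_congr rfl fun b _ => ?_
  simp only [Prod.mk.injEq, h]
  ring

end ConditionalAverages

theorem statement_2_general {Ω : Type*} [Fintype Ω]
    (n n0 : Ω → ℝ≥0) (T : Ω → ℝ≥0∞) (G : Ω → ℝ)
    (ξ : ℝ) (τ : ℝ≥0)
    (hsup : ∀ g : ℝ, 0 < pr (fun ω => G ω = g) →
      ∀ ρ : ℝ≥0∞, 0 < pr (fun ω => T ω = ρ ∧ G ω = g) →
        expecC (fun ω => T ω = ρ ∧ G ω = g) (fun ω => (n ω : ℝ)) =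
          (1 - ξ * (if ρ ≤ (τ : ℝ≥0∞) then (1 : ℝ) else 0)) *
            expecC (fun ω => T ω = ρ ∧ G ω = g) (fun ω => (n0 ω : ℝ)))
    (hci : ∀ g : ℝ, 0 < pr (fun ω => G ω = g) →
      ∀ (y : ℝ≥0) (ρ : ℝ≥0∞),
        prC (fun ω => G ω = g) (fun ω => n0 ω = y ∧ T ω = ρ) =
          prC (fun ω => G ω = g) (fun ω => n0 ω = y) *
            prC (fun ω => G ω = g) (fun ω => T ω = ρ)) :
    expec (fun ω => (n ω : ℝ)) =
      ∑ g ∈ Finset.univ.image G,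
        pr (fun ω => G ω = g) *
          expecC (fun ω => G ω = g) (fun ω => (n0 ω : ℝ)) *
          (1 - ξ * prC (fun ω => G ω = g) (fun ω => T ω ≤ (τ : ℝ≥0∞))) := by
  rw [expec_eq_sum_pr_mul_expecC _ G]
  refine sum_congr rfl fun g hg => ?_
  obtain ⟨ω₀, -, hω₀⟩ := mem_image.mp hg
  have hg_pos : 0 < pr (fun ω => G ω = g) := pr_pos_of_exists ⟨ω₀, hω₀⟩
  set ψ : ℝ≥0∞ → ℝ := fun ρ => if ρ ≤ (τ : ℝ≥0∞) then 1 else 0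
  have hsuppressed : expecC (fun ω => G ω = g) (fun ω => (n ω : ℝ)) =
      expecC (fun ω => G ω = g) (fun ω => n0 ω - ξ * (n0 ω * ψ (T ω))) := by
    rw [expecC_eq_expecC_mul_of_fiberwise _ T _ _ (fun ρ => 1 - ξ * ψ ρ) (hsup g hg_pos)]
    congr 1
    funext ω
    ring
  have hindep : expecC (fun ω => G ω = g) (fun ω => n0 ω * ψ (T ω)) =
      expecC (fun ω => G ω = g) (fun ω => (n0 ω : ℝ)) *
        prC (fun ω => G ω = g) (fun ω => T ω ≤ (τ : ℝ≥0∞)) := by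
    rw [expecC_mul_eq_mul_of_indep _ n0 T (hci g hg_pos)]
    exact congrArg _ (expecC_ite_one_zero _ (fun ω => T ω ≤ (τ : ℝ≥0∞)))
  rw [hsuppressed, expecC_sub_mul, hindep]
  ring

/-- suppression formula by severity.  `G : Ω → ℝ` is the severity
label (finite range, since `Ω` is finite).  Under the suppression hypothesis by
severity and conditional independence of `n⁰` and `T` given `G`,
`E(n) = Σ_g P(G = g)·E(n⁰ | G = g)·(1 − ξ·P(T ≤ τ | G = g))`, the sum running over the
finitely many values `g` attained by `G` (exactly those with `P(G = g) > 0`). -/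
theorem statement_2 {Ω : Type*} [Fintype Ω] [Nonempty Ω]
    (n n0 : Ω → ℝ≥0) (T : Ω → ℝ≥0∞) (G : Ω → ℝ)
    (ξ : ℝ) (hξ0 : 0 ≤ ξ) (hξ1 : ξ ≤ 1) (τ : ℝ≥0)
    (hsup : ∀ g : ℝ, 0 < pr (fun ω => G ω = g) →
      ∀ ρ : ℝ≥0∞, 0 < pr (fun ω => T ω = ρ ∧ G ω = g) →
        expecC (fun ω => T ω = ρ ∧ G ω = g) (fun ω => (n ω : ℝ)) =
          (1 - ξ * (if ρ ≤ (τ : ℝ≥0∞) then (1 : ℝ) else 0)) *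
            expecC (fun ω => T ω = ρ ∧ G ω = g) (fun ω => (n0 ω : ℝ)))
    (hci : ∀ g : ℝ, 0 < pr (fun ω => G ω = g) →
      ∀ (y : ℝ≥0) (ρ : ℝ≥0∞),
        prC (fun ω => G ω = g) (fun ω => n0 ω = y ∧ T ω = ρ) =
          prC (fun ω => G ω = g) (fun ω => n0 ω = y) *
            prC (fun ω => G ω = g) (fun ω => T ω = ρ)) :
    expec (fun ω => (n ω : ℝ)) =
      ∑ g ∈ Finset.univ.image G,
        pr (fun ω => G ω = g) *
          expecC (fun ω => G ω = g) (fun ω => (n0 ω : ℝ)) *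
          (1 - ξ * prC (fun ω => G ω = g) (fun ω => T ω ≤ (τ : ℝ≥0∞))) :=
  statement_2_general n n0 T G ξ τ hsup hci
end

section
/- In the epidemic setting, let X : Ω → ℝ be any function, let t ∈ ℝ with Ω_t nonempty, and let x ∈ ℝ. Then #Ω_t · P_t({ω ∈ Ω_t : X(σ(ω)) = x}) = Σ_{τ > 0} Σ_{ω' ∈ Ω_{t−τ}, X(ω') = x} n^τ(ω'); equivalently, P_t(X̂_t = x) = Σ_{τ > 0} P_{t−τ}(X_{t−τ} = x)·E_{P_{t−τ}}(n^τ | X = x)·(#Ω_{t−τ}/#Ω_t), where X̂ = X ∘ σ and the sum runs over the finitely many τ > 0 for which the inner sum is nonzero (terms with P_{t−τ}(X = x) = 0 are understood to vanish). -/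
open Finset
open scoped Classical ENNReal NNReal

noncomputable section

variable {Ω : Type*} [Fintype Ω]

/-- `ninf tI σ τ ω` is the number of people infected by `ω` exactly at `ω`'s infectious
age `τ`: the number of `ω' ∈ Ω_{>0}` with `σ ω' = ω` and generation time `τ^σ ω' = τ`. -/
def ninf (tI : Ω → ℝ) (σ : Ω → Ω) (τ : ℝ) (ω : Ω) : ℝ :=
  cnt (fun ω' => 0 < tI ω' ∧ σ ω' = ω ∧ tI ω' - tI (σ ω') = τ)

/-- The (finitely many) positive times `τ` such that `Ω_{t-τ}` is nonempty. -/
def genTimes (tI : Ω → ℝ) (t : ℝ) : Finset ℝ :=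
  (Finset.univ.image (fun ω' => t - tI ω')).filter (fun τ => 0 < τ)

end

/-!
Sort the individuals infected at time `t` by their infector `ω' = σ ω`, and the infectors by
the generation time `τ = t - tI ω'`, which is positive because infectors are infected earlier.
The individuals infected by `ω'` at time `t` are exactly those counted by `n^τ(ω')`, which gives
the first identity. The second is the first divided by `#Ω_t`, since
`P_{t-τ}(X = x) · E_{P_{t-τ}}(n^τ | X = x) = (Σ_{ω' ∈ Ω_{t-τ}, X ω' = x} n^τ(ω')) / #Ω_{t-τ}`.
-/

section

variable {Ω : Type*} [Fintype Ω]

theorem cnt_eq_zero_iff {E : Ω → Prop} : cnt E = 0 ↔ ∀ ω, ¬ E ω := by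
  simp [cnt, Finset.filter_eq_empty_iff]

theorem cnt_and_eq_zero_of_cnt_eq_zero {C : Ω → Prop} (hC : cnt C = 0) (E : Ω → Prop) :
    cnt (fun ω => C ω ∧ E ω) = 0 :=
  cnt_eq_zero_iff.2 fun ω hω => cnt_eq_zero_iff.1 hC ω hω.1

theorem cnt_mul_prC (C E : Ω → Prop) : cnt C * prC C E = cnt (fun ω => C ω ∧ E ω) := by
  by_cases hC : cnt C = 0
  · rw [hC, zero_mul, cnt_and_eq_zero_of_cnt_eq_zero hC]
  · exact mul_div_cancel₀ _ hC

-- When `C ∧ E` is empty both sides vanish, through the junk values of `prC` and `expecC`.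
theorem prC_mul_expecC_mul_div (C E : Ω → Prop) (f : Ω → ℝ) (N : ℝ) :
    prC C E * expecC (fun ω => C ω ∧ E ω) f * (cnt C / N) =
      (∑ ω ∈ univ.filter (fun ω => C ω ∧ E ω), f ω) / N := by
  by_cases hCE : cnt (fun ω => C ω ∧ E ω) = 0
  · have hempty : univ.filter (fun ω => C ω ∧ E ω) = ∅ :=
      Finset.filter_eq_empty_iff.2 fun ω _ => cnt_eq_zero_iff.1 hCE ω
    simp [prC, hCE, hempty]
  · have hC : cnt C ≠ 0 := fun hC => hCE (cnt_and_eq_zero_of_cnt_eq_zero hC E)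
    simp only [prC, expecC]
    field_simp
    congr

end

section

variable {Ω : Type*} [Fintype Ω] (tI : Ω → ℝ) (σ : Ω → Ω)

theorem ninf_eq_cnt_infectees {t τ : ℝ} {ω' : Ω} (hω' : tI ω' = t - τ) :
    ninf tI σ τ ω' = cnt (fun ω => 0 < tI ω ∧ σ ω = ω' ∧ tI ω = t) := by
  unfold ninf cnt
  congr 3
  ext ω
  constructor
  · rintro ⟨hpos, rfl, hτ⟩
    exact ⟨hpos, rfl, by linarith⟩
  · rintro ⟨hpos, rfl, ht⟩
    exact ⟨hpos, rfl, by linarith⟩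

theorem cnt_infected_at_eq_sum_ninf (hσ : ∀ ω, 0 < tI ω → tI (σ ω) < tI ω) (t : ℝ)
    (P : Ω → Prop) :
    cnt (fun ω => tI ω = t ∧ 0 < tI ω ∧ P (σ ω)) =
      ∑ τ ∈ genTimes tI t, ∑ ω' ∈ univ.filter (fun ω' => tI ω' = t - τ ∧ P ω'),
        ninf tI σ τ ω' := by
  set infected := univ.filter (fun ω => tI ω = t ∧ 0 < tI ω ∧ P (σ ω))
  set infectors := univ.filter (fun ω' => tI ω' < t ∧ P ω')
  have infector_mem : ∀ ω ∈ infected, σ ω ∈ infectors := by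
    simp only [infected, infectors, mem_filter, mem_univ, true_and]
    rintro ω ⟨rfl, hpos, hP⟩
    exact ⟨hσ ω hpos, hP⟩
  have age_mem : ∀ ω' ∈ infectors, t - tI ω' ∈ genTimes tI t := by
    simp only [infectors, genTimes, mem_filter, mem_image, mem_univ, true_and]
    rintro ω' ⟨hlt, -⟩
    exact ⟨⟨ω', rfl⟩, sub_pos.2 hlt⟩
  have cnt_infected : cnt (fun ω => tI ω = t ∧ 0 < tI ω ∧ P (σ ω)) = #infected := by
    rw [cnt]
    congr
  rw [cnt_infected, card_eq_sum_card_fiberwise infector_mem, Nat.cast_sum,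
    ← sum_fiberwise_of_maps_to age_mem]
  refine sum_congr rfl fun τ hτ => ?_
  have hτpos : 0 < τ := (mem_filter.1 hτ).2
  have infectors_at : infectors.filter (fun ω' => t - tI ω' = τ) =
      univ.filter (fun ω' => tI ω' = t - τ ∧ P ω') := by
    ext ω'
    simp only [infectors, mem_filter, mem_univ, true_and]
    constructor
    · rintro ⟨⟨-, hP⟩, hage⟩
      exact ⟨by linarith, hP⟩
    · rintro ⟨ht, hP⟩
      exact ⟨⟨by linarith, hP⟩, by linarith⟩
  rw [infectors_at]
  refine sum_congr rfl fun ω' hω' => ?_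
  obtain ⟨ht, hP⟩ := (mem_filter.1 hω').2
  rw [ninf_eq_cnt_infectees tI σ ht, cnt]
  congr 2
  ext ω
  simp only [infected, mem_filter, mem_univ, true_and]
  constructor
  · rintro ⟨⟨rfl, hpos, -⟩, hσω⟩
    exact ⟨hpos, hσω, rfl⟩
  · rintro ⟨hpos, rfl, rfl⟩
    exact ⟨⟨rfl, hpos, hP⟩, rfl⟩

end

theorem statement_4_general {Ω : Type*} [Fintype Ω] (tI : Ω → ℝ) (σ : Ω → Ω)
    (hσ : ∀ ω, 0 < tI ω → tI (σ ω) < tI ω)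
    (X : Ω → ℝ) (t : ℝ)
    (x : ℝ) :
    cnt (fun ω => tI ω = t) *
        prC (fun ω => tI ω = t) (fun ω => 0 < tI ω ∧ X (σ ω) = x) =
      ∑ τ ∈ genTimes tI t,
        ∑ ω' ∈ Finset.univ.filter (fun ω' => tI ω' = t - τ ∧ X ω' = x),
          ninf tI σ τ ω'
    ∧
    prC (fun ω => tI ω = t) (fun ω => 0 < tI ω ∧ X (σ ω) = x) =
      ∑ τ ∈ genTimes tI t,
        prC (fun ω => tI ω = t - τ) (fun ω => X ω = x) *
          expecC (fun ω => tI ω = t - τ ∧ X ω = x) (ninf tI σ τ) *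
          (cnt (fun ω => tI ω = t - τ) / cnt (fun ω => tI ω = t)) := by
  have hcount := cnt_infected_at_eq_sum_ninf tI σ hσ t (fun ω' => X ω' = x)
  rw [cnt_mul_prC]
  refine ⟨hcount, ?_⟩
  rw [prC, hcount, Finset.sum_div]
  refine Finset.sum_congr rfl fun τ _ => ?_
  rw [prC_mul_expecC_mul_div]

/-- Epidemic setting: `tI` gives infection times, `σ` the infector
(meaningful on `Ω_{>0} = {ω : 0 < tI ω}`, where `tI (σ ω) < tI ω`).  For any `X : Ω → ℝ`,
`t` with `Ω_t` nonempty and `x : ℝ`: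
`#Ω_t · P_t(X̂_t = x) = Σ_{τ>0} Σ_{ω' ∈ Ω_{t−τ}, X ω' = x} n^τ(ω')`, and equivalently
`P_t(X̂_t = x) = Σ_{τ>0} P_{t−τ}(X = x)·E_{P_{t−τ}}(n^τ | X = x)·(#Ω_{t−τ}/#Ω_t)`,
where `X̂ = X ∘ σ` (defined on `Ω_{>0}`) and the sums run over the finitely many `τ > 0`
with `Ω_{t−τ}` nonempty (all other terms vanish). -/
theorem statement_4 {Ω : Type*} [Fintype Ω] (tI : Ω → ℝ) (σ : Ω → Ω)
    (hσ : ∀ ω, 0 < tI ω → tI (σ ω) < tI ω)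
    (X : Ω → ℝ) (t : ℝ)
    (hne : (Finset.univ.filter (fun ω => tI ω = t)).Nonempty) (x : ℝ) :
    cnt (fun ω => tI ω = t) *
        prC (fun ω => tI ω = t) (fun ω => 0 < tI ω ∧ X (σ ω) = x) =
      ∑ τ ∈ genTimes tI t,
        ∑ ω' ∈ Finset.univ.filter (fun ω' => tI ω' = t - τ ∧ X ω' = x),
          ninf tI σ τ ω'
    ∧
    prC (fun ω => tI ω = t) (fun ω => 0 < tI ω ∧ X (σ ω) = x) =
      ∑ τ ∈ genTimes tI t,
        prC (fun ω => tI ω = t - τ) (fun ω => X ω = x) *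
          expecC (fun ω => tI ω = t - τ ∧ X ω = x) (ninf tI σ τ) *
          (cnt (fun ω => tI ω = t - τ) / cnt (fun ω => tI ω = t)) :=
  statement_4_general tI σ hσ X t x
end

section
/- In the epidemic setting with severity and testing, let t ∈ ℝ with Ω_t nonempty, assume the suppression hypothesis holds at all times t' < t, and assume the notification hypothesis: the contact-tracing notification time τ^{A,c} : Ω → [0,∞] satisfies, for all ρ ∈ ℝ, P_t(τ^{A,c} ≤ ρ) = s^c_t · (P_t(τ̌^T_t ≤ ρ) − P_t(τ̌^T_t ≤ 0)) when ρ ≥ 0 and P_t(τ^{A,c} ≤ ρ) = 0 when ρ < 0, where s^c_t ∈ [0,1] and τ̌^T(ω) := τ^T(σ(ω)) − τ^σ(ω). Then for every ρ > 0, P_t(τ^{A,c} ≤ ρ) = s^c_t · Σ_g Σ_{τ > 0} ((F^T_{t−τ,g}(ρ + τ) − F^T_{t−τ,g}(τ))/(1 − ξ_{t−τ}·F^T_{t−τ,g}(τ))) · P_t(τ^σ_t = τ, Ĝ_t = g), where g ranges over the range of G and the sum over τ runs over the finitely many positive generation times with Ω_{t−τ,g} nonempty. -/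
open Finset
open scoped Classical ENNReal NNReal

noncomputable section

variable {Ω : Type*} [Fintype Ω]

/-- The (finitely many) positive times `τ` such that `Ω_{t-τ,g}` is nonempty. -/
def genTimesG (tI G : Ω → ℝ) (t g : ℝ) : Finset ℝ :=
  ((Finset.univ.filter (fun ω' => G ω' = g)).image (fun ω' => t - tI ω')).filter
    (fun τ => 0 < τ)

/-- `FT tI G τT t' g τ` is the improper CDF `F^T_{t',g}(τ) = P_{t',g}(τ^T ≤ τ)` of the
testing time of individuals infected at `t'` with severity `g`. -/
def FT (tI G : Ω → ℝ) (τT : Ω → ℝ≥0∞) (t' g τ : ℝ) : ℝ :=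
  prC (fun ω => tI ω = t' ∧ G ω = g) (fun ω => (τT ω : EReal) ≤ (τ : ℝ))

end

/-! Group the infectees `ω ∈ Ω_t` by their generation time `τ` and the severity `g` of their
infector. For such `ω`, `τ̌^T ω ∈ (0, ρ]` means that the infector's test time lies in
`(τ, ρ + τ]`. Counting infectees through their infectors turns the number of these `ω` into the
sum of `n^τ` over the infectors in `Ω_{t-τ,g}` whose test time lies in that window. By the
suppression hypothesis every test-time class beyond `τ` has mean `n^τ` equal to
`E(n^τ) / (1 - ξ F^T(τ))`, so the windowed sum is `(F^T(ρ+τ) - F^T(τ)) / (1 - ξ F^T(τ))` times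
the sum of `n^τ` over all of `Ω_{t-τ,g}`, which is the number of infectees with generation time
`τ` and infector severity `g`. -/

section Counting

variable {Ω : Type*} [Fintype Ω]

noncomputable def condSum (C : Ω → Prop) (X : Ω → ℝ) : ℝ := ∑ ω ∈ univ.filter C, X ω

theorem cnt_nonneg (P : Ω → Prop) : 0 ≤ cnt P := Nat.cast_nonneg _

theorem cnt_congr {P Q : Ω → Prop} (h : ∀ ω, P ω ↔ Q ω) : cnt P = cnt Q := by
  rw [cnt, cnt, filter_congr fun ω _ => h ω]

theorem condSum_congr {C D : Ω → Prop} (h : ∀ ω, C ω ↔ D ω) (X : Ω → ℝ) :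
    condSum C X = condSum D X := by
  rw [condSum, condSum, filter_congr fun ω _ => h ω]

theorem expecC_congr {C D : Ω → Prop} (h : ∀ ω, C ω ↔ D ω) (X : Ω → ℝ) :
    expecC C X = expecC D X := by
  rw [expecC, expecC, filter_congr fun ω _ => h ω, cnt_congr h]

theorem condSum_eq_expecC_mul_cnt (C : Ω → Prop) (X : Ω → ℝ) :
    condSum C X = expecC C X * cnt C := by
  rcases eq_or_ne (cnt C) 0 with h | h
  · have hC : univ.filter C = ∅ := by simpa [cnt] using h
    simp [condSum, hC, h]
  · rw [expecC, div_mul_cancel₀ _ h, condSum]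

theorem condSum_eq_sum_fiberwise {α : Type*} (C : Ω → Prop) (L : Ω → α) (s : Finset α)
    (h : ∀ ω, C ω → L ω ∈ s) (X : Ω → ℝ) :
    condSum C X = ∑ a ∈ s, condSum (fun ω => C ω ∧ L ω = a) X := by
  rw [condSum, ← sum_fiberwise_of_maps_to (g := L) (t := s) fun ω hω => h ω (mem_filter.1 hω).2]
  simp only [condSum, filter_filter]
  exact sum_congr rfl fun a _ => by congr

theorem cnt_eq_sum_fiberwise {α : Type*} (C : Ω → Prop) (L : Ω → α) (s : Finset α)
    (h : ∀ ω, C ω → L ω ∈ s) :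
    cnt C = ∑ a ∈ s, cnt (fun ω => C ω ∧ L ω = a) := by
  rw [cnt, card_eq_sum_card_fiberwise (f := L) (t := s) fun ω hω => h ω (mem_filter.1 hω).2,
    Nat.cast_sum]
  simp only [cnt, filter_filter]
  exact sum_congr rfl fun a _ => by congr

theorem condSum_eq_of_expecC_fiber {α : Type*} (C : Ω → Prop) (L : Ω → α) (P : α → Prop)
    (X : Ω → ℝ) (k : ℝ)
    (h : ∀ a, P a → 0 < cnt (fun ω => C ω ∧ L ω = a) →
      expecC (fun ω => C ω ∧ L ω = a) X = k * expecC C X) :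
    condSum (fun ω => C ω ∧ P (L ω)) X = k * expecC C X * cnt (fun ω => C ω ∧ P (L ω)) := by
  have hL : ∀ ω, C ω ∧ P (L ω) → L ω ∈ univ.image L := fun ω _ => mem_image_of_mem L (mem_univ ω)
  rw [condSum_eq_sum_fiberwise _ L _ hL, cnt_eq_sum_fiberwise _ L _ hL, mul_sum]
  refine sum_congr rfl fun a _ => ?_
  by_cases hPa : P a
  · have hiff : ∀ ω, ((C ω ∧ P (L ω)) ∧ L ω = a) ↔ (C ω ∧ L ω = a) := fun ω =>
      ⟨fun h => ⟨h.1.1, h.2⟩, fun h => ⟨⟨h.1, h.2 ▸ hPa⟩, h.2⟩⟩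
    rw [condSum_congr hiff, cnt_congr hiff, condSum_eq_expecC_mul_cnt]
    rcases (cnt_nonneg fun ω => C ω ∧ L ω = a).eq_or_lt with h0 | hpos
    · simp [← h0]
    · rw [h a hPa hpos]
  · have hnone : ∀ ω, ¬ ((C ω ∧ P (L ω)) ∧ L ω = a) := fun ω h => hPa (h.2 ▸ h.1.2)
    simp [condSum, cnt, hnone]

theorem cnt_eq_cnt_and_add_cnt_and_not (P Q : Ω → Prop) :
    cnt P = cnt (fun ω => P ω ∧ Q ω) + cnt (fun ω => P ω ∧ ¬ Q ω) := by
  simp only [cnt, ← Nat.cast_add, ← card_filter_add_card_filter_not (s := univ.filter P) Q,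
    filter_filter]
  congr

theorem prC_mul_cnt (C E : Ω → Prop) : prC C E * cnt C = cnt (fun ω => C ω ∧ E ω) := by
  rcases eq_or_ne (cnt C) 0 with h | h
  · have hsplit := cnt_eq_cnt_and_add_cnt_and_not C E
    have := cnt_nonneg fun ω => C ω ∧ ¬ E ω
    have := cnt_nonneg fun ω => C ω ∧ E ω
    rw [h]
    linarith
  · rw [prC, div_mul_cancel₀ _ h]

theorem prC_pos_of_cnt_pos {C E : Ω → Prop} (h : 0 < cnt (fun ω => C ω ∧ E ω)) : 0 < prC C E := by
  have hsplit := cnt_eq_cnt_and_add_cnt_and_not C E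
  have := cnt_nonneg fun ω => C ω ∧ ¬ E ω
  exact div_pos h (by linarith)

theorem prC_sub_prC_of_imp {C E F : Ω → Prop} (h : ∀ ω, C ω → E ω → F ω) :
    prC C F - prC C E = prC C (fun ω => F ω ∧ ¬ E ω) := by
  have hsplit := cnt_eq_cnt_and_add_cnt_and_not (fun ω => C ω ∧ F ω) E
  have hE : cnt (fun ω => (C ω ∧ F ω) ∧ E ω) = cnt (fun ω => C ω ∧ E ω) :=
    cnt_congr fun ω => ⟨fun h => ⟨h.1.1, h.2⟩, fun hCE => ⟨⟨hCE.1, h ω hCE.1 hCE.2⟩, hCE.2⟩⟩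
  have hFE : cnt (fun ω => (C ω ∧ F ω) ∧ ¬ E ω) = cnt (fun ω => C ω ∧ F ω ∧ ¬ E ω) :=
    cnt_congr fun ω => and_assoc
  simp only [prC, hsplit, hE, hFE]
  ring

theorem prC_eq_sum_fiberwise {α : Type*} (C E : Ω → Prop) (L : Ω → α) (s : Finset α)
    (h : ∀ ω, C ω → E ω → L ω ∈ s) :
    prC C E = ∑ a ∈ s, prC C (fun ω => E ω ∧ L ω = a) := by
  simp only [prC, ← sum_div]
  rw [cnt_eq_sum_fiberwise _ L s fun ω hω => h ω hω.1 hω.2]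
  simp only [and_assoc]

end Counting

theorem EReal.sub_coe_le_coe_iff (x : EReal) (a b : ℝ) : x - a ≤ b ↔ x ≤ ((b + a : ℝ) : EReal) := by
  rw [EReal.sub_le_iff_le_add (.inl (EReal.coe_ne_bot a)) (.inl (EReal.coe_ne_top a)),
    EReal.coe_add]

section Epidemic

variable {Ω : Type*} [Fintype Ω]

def SuppressionIdentity (tI : Ω → ℝ) (σ : Ω → Ω) (G : Ω → ℝ) (τT : Ω → ℝ≥0∞) (ξ : ℝ → ℝ)
    (t' g τ : ℝ) : Prop :=
  ∀ ρ' : ℝ≥0∞, 0 < prC (fun ω => tI ω = t' ∧ G ω = g) (fun ω => τT ω = ρ') →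
    expecC (fun ω => tI ω = t' ∧ G ω = g ∧ τT ω = ρ') (ninf tI σ τ) =
      ((1 - ξ t' * (if (ρ' : EReal) ≤ (τ : ℝ) then (1 : ℝ) else 0)) /
          (1 - ξ t' * FT tI G τT t' g τ)) *
        expecC (fun ω => tI ω = t' ∧ G ω = g) (ninf tI σ τ)

theorem generationTime_mem_genTimesG {tI : Ω → ℝ} {σ : Ω → Ω}
    (hσ : ∀ ω, 0 < tI ω → tI (σ ω) < tI ω) (G : Ω → ℝ) {t : ℝ} {ω : Ω} (ht : tI ω = t)
    (hpos : 0 < tI ω) : tI ω - tI (σ ω) ∈ genTimesG tI G t (G (σ ω)) := by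
  simp only [genTimesG, mem_filter, mem_image, mem_univ, true_and]
  exact ⟨⟨σ ω, rfl, by linarith⟩, by linarith [hσ ω hpos]⟩

theorem pos_and_cohort_nonempty_of_mem_genTimesG {tI G : Ω → ℝ} {t g τ : ℝ}
    (hτ : τ ∈ genTimesG tI G t g) :
    0 < τ ∧ (univ.filter fun ω => tI ω = t - τ ∧ G ω = g).Nonempty := by
  simp only [genTimesG, mem_filter, mem_image, mem_univ, true_and] at hτ
  obtain ⟨⟨ω, hg, ht⟩, hτpos⟩ := hτ
  exact ⟨hτpos, ω, mem_filter.2 ⟨mem_univ _, by linarith, hg⟩⟩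

theorem cnt_infectees_eq_condSum_ninf (tI : Ω → ℝ) (σ : Ω → Ω) (t τ : ℝ) (Q : Ω → Prop) :
    cnt (fun ω => tI ω = t ∧ 0 < tI ω ∧ tI ω - tI (σ ω) = τ ∧ Q (σ ω)) =
      condSum (fun ω' => tI ω' = t - τ ∧ Q ω') (ninf tI σ τ) := by
  rw [cnt_eq_sum_fiberwise _ σ (univ.filter fun ω' => tI ω' = t - τ ∧ Q ω') fun ω hω => by
    obtain ⟨ht, -, hτ, hQ⟩ := hω
    exact mem_filter.2 ⟨mem_univ _, by linarith, hQ⟩]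
  rw [condSum]
  refine sum_congr (by congr) fun ω' hω' => cnt_congr fun ω => ?_
  obtain ⟨ht', hQ'⟩ : tI ω' = t - τ ∧ Q ω' := by simpa using hω'
  constructor
  · rintro ⟨⟨-, hpos, hτ, -⟩, rfl⟩
    exact ⟨hpos, rfl, hτ⟩
  · rintro ⟨hpos, rfl, hτ⟩
    exact ⟨⟨by linarith, hpos, hτ, hQ'⟩, rfl⟩

theorem condSum_ninf_tested_between (tI : Ω → ℝ) (σ : Ω → Ω) (G : Ω → ℝ) (τT : Ω → ℝ≥0∞)
    (ξ : ℝ → ℝ) (t' g τ ρ : ℝ) (hρ : 0 ≤ ρ)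
    (hsup : SuppressionIdentity tI σ G τT ξ t' g τ) :
    condSum (fun ω => (tI ω = t' ∧ G ω = g) ∧
        ((τT ω : EReal) ≤ ((ρ + τ : ℝ) : EReal) ∧ ¬ (τT ω : EReal) ≤ (τ : ℝ)))
        (ninf tI σ τ) =
      (FT tI G τT t' g (ρ + τ) - FT tI G τT t' g τ) / (1 - ξ t' * FT tI G τT t' g τ) *
        condSum (fun ω => tI ω = t' ∧ G ω = g) (ninf tI σ τ) := by
  have hcohort := condSum_eq_of_expecC_fiber (fun ω => tI ω = t' ∧ G ω = g) τT
    (fun x : ℝ≥0∞ => (x : EReal) ≤ ((ρ + τ : ℝ) : EReal) ∧ ¬ (x : EReal) ≤ (τ : ℝ)) (ninf tI σ τ)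
    (1 / (1 - ξ t' * FT tI G τT t' g τ)) fun ρ' hρ' hpos => by
      rw [expecC_congr (fun ω => and_assoc), hsup ρ' (prC_pos_of_cnt_pos hpos), if_neg hρ'.2]
      ring
  have hwindow : FT tI G τT t' g (ρ + τ) - FT tI G τT t' g τ =
      prC (fun ω => tI ω = t' ∧ G ω = g)
        (fun ω => (τT ω : EReal) ≤ ((ρ + τ : ℝ) : EReal) ∧ ¬ (τT ω : EReal) ≤ (τ : ℝ)) :=
    prC_sub_prC_of_imp fun ω _ h => h.trans (EReal.coe_le_coe_iff.2 (by linarith))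
  rw [hcohort, hwindow, ← prC_mul_cnt, condSum_eq_expecC_mul_cnt]
  ring

theorem cnt_infectees_tested_between (tI : Ω → ℝ) (σ : Ω → Ω) (G : Ω → ℝ) (τT : Ω → ℝ≥0∞)
    (ξ : ℝ → ℝ) (t g τ ρ : ℝ) (hρ : 0 ≤ ρ)
    (hsup : SuppressionIdentity tI σ G τT ξ (t - τ) g τ) :
    cnt (fun ω => tI ω = t ∧ 0 < tI ω ∧ tI ω - tI (σ ω) = τ ∧ G (σ ω) = g ∧
        ((τT (σ ω) : EReal) ≤ ((ρ + τ : ℝ) : EReal) ∧ ¬ (τT (σ ω) : EReal) ≤ (τ : ℝ))) =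
      (FT tI G τT (t - τ) g (ρ + τ) - FT tI G τT (t - τ) g τ) /
          (1 - ξ (t - τ) * FT tI G τT (t - τ) g τ) *
        cnt (fun ω => tI ω = t ∧ 0 < tI ω ∧ tI ω - tI (σ ω) = τ ∧ G (σ ω) = g) := by
  rw [cnt_infectees_eq_condSum_ninf tI σ t τ
      fun ω' => G ω' = g ∧ ((τT ω' : EReal) ≤ ((ρ + τ : ℝ) : EReal) ∧ ¬ (τT ω' : EReal) ≤ (τ : ℝ)),
    cnt_infectees_eq_condSum_ninf tI σ t τ fun ω' => G ω' = g,
    condSum_congr fun ω => and_assoc.symm,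
    condSum_ninf_tested_between tI σ G τT ξ _ g τ ρ hρ hsup]

theorem prC_testDelay_window_fiber (tI : Ω → ℝ) (σ : Ω → Ω) (G : Ω → ℝ) (τT : Ω → ℝ≥0∞)
    (ξ : ℝ → ℝ) (t g τ ρ : ℝ) (hρ : 0 ≤ ρ) (hsup : SuppressionIdentity tI σ G τT ξ (t - τ) g τ) :
    prC (fun ω => tI ω = t) (fun ω =>
        (((0 < tI ω ∧ (τT (σ ω) : EReal) - ((tI ω - tI (σ ω) : ℝ) : EReal) ≤ (ρ : ℝ)) ∧
          ¬ (0 < tI ω ∧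
            (τT (σ ω) : EReal) - ((tI ω - tI (σ ω) : ℝ) : EReal) ≤ ((0 : ℝ) : EReal))) ∧
          G (σ ω) = g) ∧ tI ω - tI (σ ω) = τ) =
      (FT tI G τT (t - τ) g (ρ + τ) - FT tI G τT (t - τ) g τ) /
          (1 - ξ (t - τ) * FT tI G τT (t - τ) g τ) *
        prC (fun ω => tI ω = t) (fun ω => 0 < tI ω ∧ tI ω - tI (σ ω) = τ ∧ G (σ ω) = g) := by
  rw [prC, prC, mul_div_assoc', ← cnt_infectees_tested_between tI σ G τT ξ t g τ ρ hρ hsup]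
  congr 1
  refine cnt_congr fun ω => ?_
  simp only [EReal.sub_coe_le_coe_iff, zero_add]
  constructor
  · rintro ⟨ht, ⟨⟨⟨hpos, hle⟩, hnle⟩, hg⟩, rfl⟩
    exact ⟨ht, hpos, rfl, hg, hle, fun h => hnle ⟨hpos, h⟩⟩
  · rintro ⟨ht, hpos, rfl, hg, hle, hnle⟩
    exact ⟨ht, ⟨⟨⟨hpos, hle⟩, fun h => hnle h.2⟩, hg⟩, rfl⟩

end Epidemic

theorem statement_12_general {Ω : Type*} [Fintype Ω] (tI : Ω → ℝ) (σ : Ω → Ω)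
    (hσ : ∀ ω, 0 < tI ω → tI (σ ω) < tI ω)
    (G : Ω → ℝ) (τT : Ω → ℝ≥0∞) (τAc : Ω → ℝ≥0∞) (ξ : ℝ → ℝ)
    (t : ℝ)
    (sc : ℝ)
    (hsup : ∀ t' : ℝ, t' < t → ∀ g : ℝ,
      (Finset.univ.filter (fun ω => tI ω = t' ∧ G ω = g)).Nonempty →
      ∀ τ : ℝ, 0 < τ → ∀ ρ' : ℝ≥0∞,
        0 < prC (fun ω => tI ω = t' ∧ G ω = g) (fun ω => τT ω = ρ') →
          0 < 1 - ξ t' * FT tI G τT t' g τ ∧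
          expecC (fun ω => tI ω = t' ∧ G ω = g ∧ τT ω = ρ') (ninf tI σ τ) =
            ((1 - ξ t' * (if (ρ' : EReal) ≤ (τ : ℝ) then (1 : ℝ) else 0)) /
                (1 - ξ t' * FT tI G τT t' g τ)) *
              expecC (fun ω => tI ω = t' ∧ G ω = g) (ninf tI σ τ))
    (hnotif : ∀ ρ : ℝ,
      (0 ≤ ρ →
        prC (fun ω => tI ω = t) (fun ω => (τAc ω : EReal) ≤ (ρ : ℝ)) =
          sc * (prC (fun ω => tI ω = t)
              (fun ω => 0 < tI ω ∧
                (τT (σ ω) : EReal) - ((tI ω - tI (σ ω) : ℝ) : EReal) ≤ (ρ : ℝ)) -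
            prC (fun ω => tI ω = t)
              (fun ω => 0 < tI ω ∧
                (τT (σ ω) : EReal) - ((tI ω - tI (σ ω) : ℝ) : EReal) ≤ ((0 : ℝ) : EReal)))) ∧
      (ρ < 0 →
        prC (fun ω => tI ω = t) (fun ω => (τAc ω : EReal) ≤ (ρ : ℝ)) = 0)) :
    ∀ ρ : ℝ, 0 < ρ →
      prC (fun ω => tI ω = t) (fun ω => (τAc ω : EReal) ≤ (ρ : ℝ)) =
        sc * ∑ g ∈ Finset.univ.image G, ∑ τ ∈ genTimesG tI G t g,
          ((FT tI G τT (t - τ) g (ρ + τ) - FT tI G τT (t - τ) g τ) /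
              (1 - ξ (t - τ) * FT tI G τT (t - τ) g τ)) *
            prC (fun ω => tI ω = t)
              (fun ω => 0 < tI ω ∧ tI ω - tI (σ ω) = τ ∧ G (σ ω) = g) := by
  intro ρ hρ
  rw [(hnotif ρ).1 hρ.le, prC_sub_prC_of_imp fun ω _ h =>
    ⟨h.1, h.2.trans (EReal.coe_le_coe_iff.2 hρ.le)⟩]
  congr 1
  rw [prC_eq_sum_fiberwise _ _ (fun ω => G (σ ω)) _ fun ω _ _ => mem_image_of_mem G (mem_univ _)]
  refine sum_congr rfl fun g _ => ?_
  rw [prC_eq_sum_fiberwise _ _ (fun ω => tI ω - tI (σ ω)) (genTimesG tI G t g)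
    fun ω ht hE => by
      obtain ⟨⟨⟨hpos, -⟩, -⟩, rfl⟩ := hE
      exact generationTime_mem_genTimesG hσ G ht hpos]
  refine sum_congr rfl fun τ hτ => ?_
  obtain ⟨hτpos, hcohort⟩ := pos_and_cohort_nonempty_of_mem_genTimesG hτ
  exact prC_testDelay_window_fiber tI σ G τT ξ t g τ ρ hρ.le
    fun ρ' h => (hsup (t - τ) (by linarith) g hcohort τ hτpos ρ' h).2

/-- time evolution equation for the contact-tracing notification
time.  Epidemic setting with severity `G`, testing time `τ^T : Ω → [0,∞]`,
notification time `τ^{A,c} : Ω → [0,∞]`, isolation probabilities `ξ : ℝ → [0,1]`, and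
contact-tracing efficiency `s^c_t ∈ [0,1]`.  Assume the suppression hypothesis at all
`t' < t` and the notification hypothesis relating `τ^{A,c}` to
`τ̌^T(ω) := τ^T(σ ω) − τ^σ(ω)`.  Then for every `ρ > 0`:
`P_t(τ^{A,c} ≤ ρ) = s^c_t · Σ_g Σ_{τ>0} ((F^T_{t−τ,g}(ρ+τ) − F^T_{t−τ,g}(τ))/(1 − ξ_{t−τ}·F^T_{t−τ,g}(τ))) · P_t(τ^σ_t = τ, Ĝ_t = g)`. -/
theorem statement_12 {Ω : Type*} [Fintype Ω] (tI : Ω → ℝ) (σ : Ω → Ω)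
    (hσ : ∀ ω, 0 < tI ω → tI (σ ω) < tI ω)
    (G : Ω → ℝ) (τT : Ω → ℝ≥0∞) (τAc : Ω → ℝ≥0∞) (ξ : ℝ → ℝ)
    (hξ : ∀ s : ℝ, 0 ≤ ξ s ∧ ξ s ≤ 1) (t : ℝ)
    (sc : ℝ) (hsc0 : 0 ≤ sc) (hsc1 : sc ≤ 1)
    (hne : (Finset.univ.filter (fun ω => tI ω = t)).Nonempty)
    (hsup : ∀ t' : ℝ, t' < t → ∀ g : ℝ,
      (Finset.univ.filter (fun ω => tI ω = t' ∧ G ω = g)).Nonempty →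
      ∀ τ : ℝ, 0 < τ → ∀ ρ' : ℝ≥0∞,
        0 < prC (fun ω => tI ω = t' ∧ G ω = g) (fun ω => τT ω = ρ') →
          0 < 1 - ξ t' * FT tI G τT t' g τ ∧
          expecC (fun ω => tI ω = t' ∧ G ω = g ∧ τT ω = ρ') (ninf tI σ τ) =
            ((1 - ξ t' * (if (ρ' : EReal) ≤ (τ : ℝ) then (1 : ℝ) else 0)) /
                (1 - ξ t' * FT tI G τT t' g τ)) *
              expecC (fun ω => tI ω = t' ∧ G ω = g) (ninf tI σ τ))
    (hnotif : ∀ ρ : ℝ,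
      (0 ≤ ρ →
        prC (fun ω => tI ω = t) (fun ω => (τAc ω : EReal) ≤ (ρ : ℝ)) =
          sc * (prC (fun ω => tI ω = t)
              (fun ω => 0 < tI ω ∧
                (τT (σ ω) : EReal) - ((tI ω - tI (σ ω) : ℝ) : EReal) ≤ (ρ : ℝ)) -
            prC (fun ω => tI ω = t)
              (fun ω => 0 < tI ω ∧
                (τT (σ ω) : EReal) - ((tI ω - tI (σ ω) : ℝ) : EReal) ≤ ((0 : ℝ) : EReal)))) ∧
      (ρ < 0 →
        prC (fun ω => tI ω = t) (fun ω => (τAc ω : EReal) ≤ (ρ : ℝ)) = 0)) :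
    ∀ ρ : ℝ, 0 < ρ →
      prC (fun ω => tI ω = t) (fun ω => (τAc ω : EReal) ≤ (ρ : ℝ)) =
        sc * ∑ g ∈ Finset.univ.image G, ∑ τ ∈ genTimesG tI G t g,
          ((FT tI G τT (t - τ) g (ρ + τ) - FT tI G τT (t - τ) g τ) /
              (1 - ξ (t - τ) * FT tI G τT (t - τ) g τ)) *
            prC (fun ω => tI ω = t)
              (fun ω => 0 < tI ω ∧ tI ω - tI (σ ω) = τ ∧ G (σ ω) = g) :=
  statement_12_general tI σ hσ G τT τAc ξ t sc hsup hnotif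
end
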